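/- There exists a chestnut G that is not perfectly deterministic; that is, there exist a chestnut G, a set B of bursts for G, a state G'∈States(G,B) and a burst b∈B such that there are at least two distinct perfect total legal configuration trails for G' and b. -/

import Mathlib

/- Formalization of multi-soliton automata (Bordihn–Schulz),
   following the definitions of the paper. -/

namespace Soliton

variable {V : Type}

/-- An undirected, loopless graph on node set `V`. -/
structure SGraph (V : Type) where
  adj : V → V → Prop
  symm : ∀ u v, adj u v → adj v u
  loopless : ∀ v, ¬ adj v v

/-- Degree of a node: the number of neighbours. -/
noncomputable def degree (G : SGraph V) (n : V) : ℕ := Nat.card {v // G.adj n v}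

/-- An exterior node has degree 1. -/
def Exterior (G : SGraph V) (n : V) : Prop := degree G n = 1

/-- An interior node has degree at least 2. -/
def Interior (G : SGraph V) (n : V) : Prop := 2 ≤ degree G n

/-- A weight function: symmetric, with weight in {1,2} exactly on edges and 0 elsewhere. -/
def IsWeighting (G : SGraph V) (w : V → V → ℕ) : Prop :=
  (∀ u v, w u v = w v u) ∧
  (∀ u v, G.adj u v → w u v = 1 ∨ w u v = 2) ∧
  (∀ u v, ¬ G.adj u v → w u v = 0)

/-- The weight of a node: sum of the weights of the incident edges. -/
noncomputable def nodeWeight (w : V → V → ℕ) (n : V) : ℕ := ∑ᶠ v, w n v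

/-- A soliton graph: degrees between 1 and 3, node-weight conditions, and every
component contains an exterior node. -/
def IsSolitonGraph (G : SGraph V) (w : V → V → ℕ) : Prop :=
  IsWeighting G w ∧
  (∀ n, 1 ≤ degree G n ∧ degree G n ≤ 3) ∧
  (∀ n, Exterior G n → nodeWeight w n = 1 ∨ nodeWeight w n = 2) ∧
  (∀ n, Interior G n → nodeWeight w n = degree G n + 1) ∧
  (∀ n, ∃ e, Exterior G e ∧ Relation.ReflTransGen G.adj n e)

/-- A burst `(n₁,n₁')‖_{k₁}(n₂,n₂')‖_{k₂}⋯(n_m,n_m')⊥`: each soliton `i` has an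
entry node, an exit node, and a delay (the delay of the first soliton is 0). -/
structure Burst (V : Type) where
  m : ℕ
  hm : 0 < m
  entry : Fin m → V
  exit : Fin m → V
  delay : Fin m → ℕ
  delay_zero : delay ⟨0, hm⟩ = 0

/-- A burst for a soliton graph: all entry and exit nodes are exterior. -/
def IsBurstFor (G : SGraph V) (b : Burst V) : Prop :=
  ∀ i, Exterior G (b.entry i) ∧ Exterior G (b.exit i)

/-- The arrival time of soliton `i`: the sum of the delays up to and including `i`. -/
def Burst.arrival (b : Burst V) (i : Fin b.m) : ℕ :=
  ∑ j ∈ Finset.univ.filter (fun j => j ≤ i), b.delay j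

/-- The position of a soliton: `wait k` with `k ≥ 1` means `k` steps until entry,
`wait 0` means the soliton has left the graph, and `node n` means it is at node `n`. -/
inductive SolPos (V : Type) where
  | wait : ℕ → SolPos V
  | node : V → SolPos V

/-- The initial position map of a burst. -/
def initPos (b : Burst V) : Fin b.m → SolPos V := fun i =>
  if b.arrival i = 0 then SolPos.node (b.entry i) else SolPos.wait (b.arrival i)

/-- A position map is final if every soliton has left the graph. -/
def IsFinal {m : ℕ} (π : Fin m → SolPos V) : Prop := ∀ i, π i = SolPos.wait 0

/-- A configuration: a weighting of the graph together with a position map. -/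
abbrev Config (V : Type) (m : ℕ) := (V → V → ℕ) × (Fin m → SolPos V)

/-- The one-step (potential successor) relation on the position of a single soliton:
waiting counters decrease, soliton `i` enters at its entry node, a soliton in the
graph moves to an adjacent node, and a soliton may leave only at its exit node. -/
def PosStep (G : SGraph V) (b : Burst V) (i : Fin b.m) (p p' : SolPos V) : Prop :=
  (p = SolPos.wait 0 ∧ p' = SolPos.wait 0) ∨
  (p = SolPos.wait 1 ∧ p' = SolPos.node (b.entry i)) ∨
  (∃ k : ℕ, p = SolPos.wait (k + 2) ∧ p' = SolPos.wait (k + 1)) ∨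
  (∃ n : V, p = SolPos.node n ∧
    ((n = b.exit i ∧ p' = SolPos.wait 0) ∨ (∃ n', G.adj n n' ∧ p' = SolPos.node n')))

/-- Some soliton moves from `p` to `q` in the step from `π` to `π'`. -/
def MovesAlong {m : ℕ} (π π' : Fin m → SolPos V) (p q : V) : Prop :=
  ∃ i, π i = SolPos.node p ∧ π' i = SolPos.node q

/-- The weight of a traversed edge changes from `w` to `3 - w`; all other
weights remain unchanged. -/
def WeightStep {m : ℕ} (w w' : V → V → ℕ) (π π' : Fin m → SolPos V) : Prop :=
  ∀ p q : V,
    ((MovesAlong π π' p q ∨ MovesAlong π π' q p) → w' p q = 3 - w p q) ∧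
    (¬(MovesAlong π π' p q ∨ MovesAlong π π' q p) → w' p q = w p q)

/-- A single step between configurations. -/
def StepOk (G : SGraph V) (b : Burst V) (c c' : Config V b.m) : Prop :=
  (∀ i, PosStep G b i (c.2 i) (c'.2 i)) ∧ WeightStep c.1 c'.1 c.2 c'.2

/-- The conditions of a configuration trail involving two consecutive steps
`c, c', c''`: a soliton that has just entered moves on into the graph; a soliton
reaching its exit node from inside the graph leaves; consecutive edges traversed
by a soliton have alternating weights; a soliton never immediately turns around. -/
def TwoStepOk (G : SGraph V) (b : Burst V) (c c' c'' : Config V b.m) : Prop :=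
  ∀ i : Fin b.m,
    (∀ n : V, c'.2 i = SolPos.node n → Exterior G n → c.2 i = SolPos.wait 1 →
      ∃ r, c''.2 i = SolPos.node r) ∧
    (c'.2 i = SolPos.node (b.exit i) → Exterior G (b.exit i) →
      (∃ p, c.2 i = SolPos.node p) → c''.2 i = SolPos.wait 0) ∧
    (∀ p q r : V, c.2 i = SolPos.node p → c'.2 i = SolPos.node q → Interior G q →
      c''.2 i = SolPos.node r → c.1 p q ≠ c'.1 q r) ∧
    (c''.2 i ≠ SolPos.wait 0 → c''.2 i ≠ c'.2 i ∧ c''.2 i ≠ c.2 i)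

/-- A configuration trail for a soliton graph with weighting `w0` and a burst `b`. -/
def IsTrail (G : SGraph V) (w0 : V → V → ℕ) (b : Burst V) (len : ℕ)
    (cfg : Fin (len + 1) → Config V b.m) : Prop :=
  (cfg 0).1 = w0 ∧ (cfg 0).2 = initPos b ∧
  (∀ (j : ℕ) (h : j < len), StepOk G b (cfg ⟨j, by omega⟩) (cfg ⟨j + 1, by omega⟩)) ∧
  (∀ (h : 1 ≤ len) (i : Fin b.m) (n : V), (cfg 0).2 i = SolPos.node n →
    ∃ n', (cfg ⟨1, by omega⟩).2 i = SolPos.node n') ∧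
  (∀ (j : ℕ) (h : j + 2 ≤ len),
    TwoStepOk G b (cfg ⟨j, by omega⟩) (cfg ⟨j + 1, by omega⟩) (cfg ⟨j + 2, by omega⟩)) ∧
  (∀ (j : ℕ) (h : j < len), ¬ IsFinal (cfg ⟨j, by omega⟩).2)

/-- The legality conditions between two consecutive configurations: two solitons
at the same node move to different nodes, and two solitons never traverse the
same edge in opposite directions in the same step. -/
def LegalStep {m : ℕ} (G : SGraph V) (c c' : Config V m) : Prop :=
  (∀ i i' : Fin m, i ≠ i' → ∀ n : V, c.2 i = SolPos.node n → c.2 i' = SolPos.node n →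
    c'.2 i ≠ c'.2 i') ∧
  (∀ i i' : Fin m, i ≠ i' → ∀ p q : V, c.2 i = SolPos.node p → c.2 i' = SolPos.node q →
    G.adj p q → ¬(c'.2 i = SolPos.node q ∧ c'.2 i' = SolPos.node p))

/-- A legal configuration trail. -/
def IsLegalTrail (G : SGraph V) (w0 : V → V → ℕ) (b : Burst V) (len : ℕ)
    (cfg : Fin (len + 1) → Config V b.m) : Prop :=
  IsTrail G w0 b len cfg ∧
  ∀ (j : ℕ) (h : j < len), LegalStep G (cfg ⟨j, by omega⟩) (cfg ⟨j + 1, by omega⟩)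

/-- A total legal configuration trail: a legal trail whose last position map is final. -/
def IsTotalLegalTrail (G : SGraph V) (w0 : V → V → ℕ) (b : Burst V) (len : ℕ)
    (cfg : Fin (len + 1) → Config V b.m) : Prop :=
  IsLegalTrail G w0 b len cfg ∧ IsFinal (cfg (Fin.last len)).2

/-- `Result(G, b)`: the set of weightings obtained as final graphs of total legal
configuration trails for `(G, w0)` and `b`. -/
def ResultSet (G : SGraph V) (w0 : V → V → ℕ) (b : Burst V) : Set (V → V → ℕ) :=
  {w' | ∃ (len : ℕ) (cfg : Fin (len + 1) → Config V b.m),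
    IsTotalLegalTrail G w0 b len cfg ∧ (cfg (Fin.last len)).1 = w'}

/-- `States(G, B)`: the closure of `{w0}` under taking results of bursts in `B`. -/
inductive InStates (G : SGraph V) (w0 : V → V → ℕ) (B : Set (Burst V)) :
    (V → V → ℕ) → Prop
  | refl : InStates G w0 B w0
  | step {w' w'' : V → V → ℕ} {b : Burst V} (h : InStates G w0 B w') (hb : b ∈ B)
      (hr : w'' ∈ ResultSet G w' b) : InStates G w0 B w''

/-- `States(G, B)` as a set. -/
def StatesSet (G : SGraph V) (w0 : V → V → ℕ) (B : Set (Burst V)) :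
    Set (V → V → ℕ) := {w' | InStates G w0 B w'}

/-- The data of a configuration trail: a length together with a sequence of
configurations. -/
def TrailData (V : Type) (m : ℕ) := Σ len : ℕ, Fin (len + 1) → Config V m

/-- The trail data is a total legal configuration trail. -/
def IsTotalLegalTrailD (G : SGraph V) (w0 : V → V → ℕ) (b : Burst V)
    (t : TrailData V b.m) : Prop :=
  IsTotalLegalTrail G w0 b t.1 t.2

/-- The soliton automaton `A_B(G)` is strongly deterministic: for every state and
burst there is at most one total legal configuration trail. -/
def StronglyDet (G : SGraph V) (w0 : V → V → ℕ) (B : Set (Burst V)) : Prop :=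
  ∀ w', InStates G w0 B w' → ∀ b ∈ B, ∀ t t' : TrailData V b.m,
    IsTotalLegalTrailD G w' b t → IsTotalLegalTrailD G w' b t' → t = t'

/-- The prefix of length `i` of a sequence of configurations. -/
def prefixCfg {α : Type} {len : ℕ} (cfg : Fin (len + 1) → α) (i : ℕ) (h : i ≤ len) :
    Fin (i + 1) → α := fun j => cfg ⟨j, by have := j.isLt; omega⟩

/-- `SC(C)`: the set of position maps by which the configuration trail `C` can be
extended by one configuration. -/
def SC (G : SGraph V) (w0 : V → V → ℕ) (b : Burst V) (len : ℕ)
    (cfg : Fin (len + 1) → Config V b.m) : Set (Fin b.m → SolPos V) :=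
  {π' | ∃ wn : V → V → ℕ, IsTrail G w0 b (len + 1) (Fin.snoc cfg (wn, π'))}

/-- A configuration trail is perfect if no two of its configurations at distinct
positions are successor-equivalent (equal as configurations with equal sets of
possible successor position maps). -/
def IsPerfect (G : SGraph V) (w0 : V → V → ℕ) (b : Burst V) (len : ℕ)
    (cfg : Fin (len + 1) → Config V b.m) : Prop :=
  ∀ (i j : ℕ) (hij : i < j) (hj : j ≤ len),
    ¬(cfg ⟨i, by omega⟩ = cfg ⟨j, by omega⟩ ∧
      SC G w0 b i (prefixCfg cfg i (by omega)) = SC G w0 b j (prefixCfg cfg j hj))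

/-- The trail data is a perfect configuration trail. -/
def IsPerfectD (G : SGraph V) (w0 : V → V → ℕ) (b : Burst V)
    (t : TrailData V b.m) : Prop :=
  IsPerfect G w0 b t.1 t.2

/-- The soliton automaton `A_B(G)` is perfectly deterministic: for every state and
burst there is at most one perfect total legal configuration trail. -/
def PerfectlyDet (G : SGraph V) (w0 : V → V → ℕ) (B : Set (Burst V)) : Prop :=
  ∀ w', InStates G w0 B w' → ∀ b ∈ B, ∀ t t' : TrailData V b.m,
    IsTotalLegalTrailD G w' b t → IsPerfectD G w' b t →
    IsTotalLegalTrailD G w' b t' → IsPerfectD G w' b t' → t = t'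

/-- `g` is an upper bound on the amount of non-determinism of `A_B(G)`. -/
def DegreeBound (G : SGraph V) (w0 : V → V → ℕ) (B : Set (Burst V)) (g : ℕ) : Prop :=
  ∀ w', InStates G w0 B w' → ∀ b ∈ B, (ResultSet G w' b).ncard ≤ g

/-- The degree of non-determinism of `A_B(G)` is `g`: the smallest integer `g ≥ 1`
with `|Result(G', b)| ≤ g` for all states `G'` and bursts `b ∈ B`. -/
def HasDegreeOfNondeterminism (G : SGraph V) (w0 : V → V → ℕ) (B : Set (Burst V))
    (g : ℕ) : Prop :=
  1 ≤ g ∧ DegreeBound G w0 B g ∧ ∀ g', 1 ≤ g' → DegreeBound G w0 B g' → g ≤ g'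

/-- The edge `(u, v)` is used (in this direction) in the configuration trail `cfg`. -/
def UsedInTrail {m : ℕ} (len : ℕ) (cfg : Fin (len + 1) → Config V m) (u v : V) : Prop :=
  ∃ (j : ℕ) (h : j < len) (i : Fin m),
    (cfg ⟨j, by omega⟩).2 i = SolPos.node u ∧ (cfg ⟨j + 1, by omega⟩).2 i = SolPos.node v

/-- An indecomposable soliton graph: it contains no impervious path, i.e. every
edge is used in some configuration trail of some state reachable with some set
of bursts. -/
def Indecomposable (G : SGraph V) (w0 : V → V → ℕ) : Prop :=
  ∀ u v, G.adj u v →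
    ∃ B : Set (Burst V), (∀ b ∈ B, IsBurstFor G b) ∧
      ∃ w', InStates G w0 B w' ∧ ∃ b ∈ B, ∃ (len : ℕ) (cfg : Fin (len + 1) → Config V b.m),
        IsTrail G w' b len cfg ∧ (UsedInTrail len cfg u v ∨ UsedInTrail len cfg v u)

/-- Walks of a given length in a graph. -/
inductive WalkLen (G : SGraph V) : V → V → ℕ → Prop
  | refl (v : V) : WalkLen G v v 0
  | tail {u v x : V} {n : ℕ} : WalkLen G u v n → G.adj v x → WalkLen G u x (n + 1)

/-- The graph is connected. -/
def ConnectedG (G : SGraph V) : Prop := ∀ u v, Relation.ReflTransGen G.adj u v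

/-- The edge `(u, v)` is a bridge: removing it disconnects `u` from `v`. -/
def IsBridge (G : SGraph V) (u v : V) : Prop :=
  ¬ Relation.ReflTransGen (fun a c => G.adj a c ∧ ¬((a = u ∧ c = v) ∨ (a = v ∧ c = u))) u v

/-- The underlying graph is a tree: connected and every edge is a bridge. -/
def IsTreeG (G : SGraph V) : Prop := ConnectedG G ∧ ∀ u v, G.adj u v → IsBridge G u v

/-- `(u, v)` is an edge of the cycle `cyc`. -/
def CycleEdge {L : ℕ} (cyc : ZMod (2 * L) → V) (u v : V) : Prop :=
  ∃ t, (u = cyc t ∧ v = cyc (t + 1)) ∨ (v = cyc t ∧ u = cyc (t + 1))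

/-- The distance from a node to the cycle. -/
noncomputable def distToCycle (G : SGraph V) {L : ℕ} (cyc : ZMod (2 * L) → V)
    (n : V) : ℕ :=
  sInf {d | ∃ t, WalkLen G n (cyc t) d}

/-- A chestnut with distinguished cycle `cyc` of even length `2L`: an
indecomposable soliton graph consisting of a single cycle of even length
together with paths leading into it, such that entry points of different paths
(nodes of degree 3 on the cycle) are at even distance along the cycle, and paths
leading to the cycle meet (at nodes of degree 3 off the cycle) only at even
distance from their entry into the cycle. -/
def IsChestnutWith (G : SGraph V) (w : V → V → ℕ) (L : ℕ)
    (cyc : ZMod (2 * L) → V) : Prop :=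
  IsSolitonGraph G w ∧ Indecomposable G w ∧ 2 ≤ L ∧
  Function.Injective cyc ∧ (∀ t, G.adj (cyc t) (cyc (t + 1))) ∧ ConnectedG G ∧
  (∀ u v, G.adj u v → ¬ CycleEdge cyc u v → IsBridge G u v) ∧
  (∀ s t : ZMod (2 * L), degree G (cyc s) = 3 → degree G (cyc t) = 3 →
    ∃ d, t = s + 2 * d) ∧
  (∀ n, (∀ t, n ≠ cyc t) → degree G n = 3 → Even (distToCycle G cyc n))

/-- A chestnut. -/
def IsChestnut (G : SGraph V) (w : V → V → ℕ) : Prop :=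
  ∃ (L : ℕ) (cyc : ZMod (2 * L) → V), IsChestnutWith G w L cyc

/-- The burst `(x, y)⊥` of length 1. -/
def singleBurst (x y : V) : Burst V :=
  { m := 1, hm := one_pos, entry := fun _ => x, exit := fun _ => y,
    delay := fun _ => 0, delay_zero := rfl }

/-- The burst `(e, e)‖₁(e, e)⊥` of length 2: two solitons enter and exit at `e`,
the second entering one time step after the first. -/
def doubleBurst (e : V) : Burst V :=
  { m := 2, hm := two_pos, entry := fun _ => e, exit := fun _ => e,
    delay := fun i => if (i : ℕ) = 0 then 0 else 1, delay_zero := rfl }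

/-!
Take the 4-cycle `0 – 1 – 2 – 3 – 0` with double edges `{1,2}`, `{3,0}` and pendant edges
`0 – 4`, `2 – 5`; it is a chestnut whose two entry points `0`, `2` lie at distance 2 on the
cycle. Send a soliton from `4` to `5` and, two steps later, a second one from `5` to `4`. Both
reach node `2` at the same moment, when all three edges at `2` have weight 2. In both trails the
first soliton continues to `5`, while the second may continue either to `1` or to `3`; both
choices complete to total legal trails. Neither trail repeats a position map, so no two of its
configurations are equal, and both are perfect.
-/

instance [DecidableEq V] : DecidableEq (SolPos V) := fun a b =>
  match a, b with
  | .wait k, .wait l =>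
    if h : k = l then isTrue (h ▸ rfl) else isFalse (by rintro ⟨⟩; exact h rfl)
  | .wait _, .node _ => isFalse (by rintro ⟨⟩)
  | .node _, .wait _ => isFalse (by rintro ⟨⟩)
  | .node v, .node u =>
    if h : v = u then isTrue (h ▸ rfl) else isFalse (by rintro ⟨⟩; exact h rfl)

theorem degree_eq_card [Fintype V] (G : SGraph V) [DecidableRel G.adj] (n : V) :
    degree G n = (Finset.univ.filter (G.adj n)).card := by
  rw [degree, Nat.card_eq_fintype_card, Fintype.card_subtype]

section Decidability

variable [Fintype V] [DecidableEq V] {G : SGraph V} [DecidableRel G.adj]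

instance (n : V) : Decidable (Exterior G n) :=
  decidable_of_iff' _ (by rw [Exterior, degree_eq_card])

instance (n : V) : Decidable (Interior G n) :=
  decidable_of_iff' _ (by rw [Interior, degree_eq_card])

instance (b : Burst V) (i : Fin b.m) (p p' : SolPos V) : Decidable (PosStep G b i p p') :=
  match p with
  | .wait 0 => decidable_of_iff (p' = .wait 0) (by simp [PosStep])
  | .wait 1 => decidable_of_iff (p' = .node (b.entry i)) (by simp [PosStep])
  | .wait (k + 2) => decidable_of_iff (p' = .wait (k + 1)) (by simp [PosStep])
  | .node n =>
    decidable_of_iff ((n = b.exit i ∧ p' = .wait 0) ∨ ∃ n', G.adj n n' ∧ p' = .node n')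
      (by simp [PosStep])

instance (b : Burst V) : Decidable (IsBurstFor G b) := by
  unfold IsBurstFor; infer_instance

instance {L : ℕ} [NeZero (2 * L)] (cyc : ZMod (2 * L) → V) (u v : V) :
    Decidable (CycleEdge cyc u v) := by
  unfold CycleEdge; infer_instance

variable {m : ℕ} (π π' : Fin m → SolPos V)

instance (p q : V) : Decidable (MovesAlong π π' p q) := by
  unfold MovesAlong; infer_instance

instance : Decidable (IsFinal π) := by
  unfold IsFinal; infer_instance

variable (b : Burst V) (c c' c'' : Config V b.m)

set_option synthInstance.maxSize 2000 in
instance : Decidable (TwoStepOk G b c c' c'') := by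
  unfold TwoStepOk; infer_instance

set_option synthInstance.maxSize 2000 in
instance : Decidable (LegalStep G c c') := by
  unfold LegalStep; infer_instance

end Decidability

theorem isPerfect_of_injective {G : SGraph V} {w0 : V → V → ℕ} {b : Burst V} {len : ℕ}
    {cfg : Fin (len + 1) → Config V b.m} (hcfg : Function.Injective cfg) :
    IsPerfect G w0 b len cfg :=
  fun _ _ hij _ ⟨heq, _⟩ => hij.ne (Fin.mk.inj_iff.mp (hcfg heq))

section Trails

variable [DecidableEq V] {m : ℕ}

def flipAlong (w : V → V → ℕ) (π π' : Fin m → SolPos V) : V → V → ℕ := fun p q =>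
  if MovesAlong π π' p q ∨ MovesAlong π π' q p then 3 - w p q else w p q

theorem weightStep_flipAlong (w : V → V → ℕ) (π π' : Fin m → SolPos V) :
    WeightStep w (flipAlong w π π') π π' := fun _ _ =>
  ⟨fun h => if_pos h, fun h => if_neg h⟩

def weightsAt (w0 : V → V → ℕ) (π : ℕ → Fin m → SolPos V) : ℕ → V → V → ℕ
  | 0 => w0
  | j + 1 => flipAlong (weightsAt w0 π j) (π j) (π (j + 1))

def configAt (w0 : V → V → ℕ) (π : ℕ → Fin m → SolPos V) (j : ℕ) : Config V m :=
  (weightsAt w0 π j, π j)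

/-- A configuration trail is determined by its initial weighting and its position maps. -/
def trailOf (w0 : V → V → ℕ) (π : ℕ → Fin m → SolPos V) (len : ℕ) :
    Fin (len + 1) → Config V m := fun j => configAt w0 π j

variable {w0 : V → V → ℕ} {len : ℕ}

theorem isTotalLegalTrail_trailOf {G : SGraph V} {b : Burst V} {π : ℕ → Fin b.m → SolPos V}
    (hinit : π 0 = initPos b)
    (hstep : ∀ j < len, ∀ i, PosStep G b i (π j i) (π (j + 1) i))
    (hfirst : 1 ≤ len → ∀ i n, π 0 i = .node n → ∃ n', π 1 i = .node n')
    (htwo : ∀ j < len - 1,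
      TwoStepOk G b (configAt w0 π j) (configAt w0 π (j + 1)) (configAt w0 π (j + 2)))
    (hlegal : ∀ j < len, LegalStep G (configAt w0 π j) (configAt w0 π (j + 1)))
    (hlive : ∀ j < len, ¬ IsFinal (π j)) (hfinal : IsFinal (π len)) :
    IsTotalLegalTrail G w0 b len (trailOf w0 π len) :=
  ⟨⟨⟨rfl, hinit, fun j hj => ⟨hstep j hj, weightStep_flipAlong _ _ _⟩, hfirst,
    fun j hj => htwo j (by omega), hlive⟩, hlegal⟩, hfinal⟩

theorem trailOf_injective {π : ℕ → Fin m → SolPos V}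
    (hπ : ∀ i ≤ len, ∀ j ≤ len, π i = π j → i = j) :
    Function.Injective (trailOf w0 π len) := fun i j h =>
  Fin.ext (hπ i (Fin.is_le i) j (Fin.is_le j) (congrArg Prod.snd h))

theorem usedInTrail_trailOf {π : ℕ → Fin m → SolPos V} {u v : V}
    (h : ∃ j < len, ∃ i, π j i = .node u ∧ π (j + 1) i = .node v) :
    UsedInTrail len (trailOf w0 π len) u v :=
  let ⟨j, hj, i, hu, hv⟩ := h; ⟨j, hj, i, hu, hv⟩

end Trails

section Graphs

def SGraph.ofEdges (E : List (V × V)) (hE : ∀ e ∈ E, e.1 ≠ e.2) : SGraph V where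
  adj u v := (u, v) ∈ E ∨ (v, u) ∈ E
  symm _ _ := Or.symm
  loopless _ h := h.elim (hE _ · rfl) (hE _ · rfl)

instance [DecidableEq V] (E : List (V × V)) (hE : ∀ e ∈ E, e.1 ≠ e.2) :
    DecidableRel (SGraph.ofEdges E hE).adj := fun _ _ => instDecidableOr

variable {G : SGraph V}

theorem eq_of_adj_of_exterior {v x y : V} (hv : Exterior G v) (hx : G.adj v x)
    (hy : G.adj v y) : x = y :=
  congrArg Subtype.val ((Nat.card_eq_one_iff_unique.mp hv).1.elim ⟨x, hx⟩ ⟨y, hy⟩)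

theorem not_reflTransGen_of_invariant {α : Type*} {r : α → α → Prop} (S : α → Prop)
    (hS : ∀ a c, S a → r a c → S c) {a c : α} (ha : S a) (hc : ¬ S c) :
    ¬ Relation.ReflTransGen r a c := fun h =>
  hc (h.rec ha fun _ hr ih => hS _ _ ih hr)

theorem isBridge_of_exterior {u v : V} (huv : G.adj u v) (hv : Exterior G v) :
    IsBridge G u v ∧ IsBridge G v u := by
  have hvu := G.symm _ _ huv
  constructor
  · refine not_reflTransGen_of_invariant (· ≠ v) ?_ (fun h => G.loopless v (h ▸ huv)) (· rfl)
    rintro a c _ ⟨hac, hne⟩ rfl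
    exact hne (Or.inl ⟨eq_of_adj_of_exterior hv (G.symm _ _ hac) hvu, rfl⟩)
  · refine not_reflTransGen_of_invariant (· = v) ?_ rfl (fun h => G.loopless v (h ▸ hvu))
    rintro a c ha ⟨hac, hne⟩
    exact (hne (Or.inl ⟨ha, eq_of_adj_of_exterior hv (ha ▸ hac) hvu⟩)).elim

theorem reflTransGen_of_forall_exists_lt {α : Type*} [Preorder α] [WellFoundedLT α]
    {r : α → α → Prop} {a : α} (h : ∀ x, x ≠ a → ∃ y < x, r y x) (x : α) :
    Relation.ReflTransGen r a x := by
  induction x using WellFoundedLT.induction with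
  | _ x ih =>
    by_cases hx : x = a
    · exact hx ▸ .refl
    · obtain ⟨y, hyx, hy⟩ := h x hx
      exact (ih y hyx).tail hy

theorem connectedG_of_reflTransGen {a : V} (h : ∀ x, Relation.ReflTransGen G.adj a x) :
    ConnectedG G := by
  have : Std.Symm G.adj := ⟨G.symm⟩
  exact fun x y => (Std.Symm.symm _ _ (h x)).trans (h y)

end Graphs

section Example

-- `abbrev`, so that instance search sees the decidable adjacency of `SGraph.ofEdges`
abbrev exampleGraph : SGraph (Fin 6) :=
  .ofEdges [(0, 1), (1, 2), (2, 3), (3, 0), (0, 4), (2, 5)] (by decide)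

def exampleWeight : Fin 6 → Fin 6 → ℕ :=
  ![![0, 1, 0, 2, 1, 0], ![1, 0, 2, 0, 0, 0], ![0, 2, 0, 1, 0, 1],
    ![2, 0, 1, 0, 0, 0], ![1, 0, 0, 0, 0, 0], ![0, 0, 1, 0, 0, 0]]

/-- The burst `(4, 5)‖₂(5, 4)⊥`; it is an `abbrev` so that `Fin exampleBurst.m` and `Fin 2`
unify during instance search. -/
abbrev exampleBurst : Burst (Fin 6) :=
  { m := 2, hm := two_pos, entry := ![4, 5], exit := ![5, 4], delay := ![0, 2],
    delay_zero := rfl }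

def exampleCycle : ZMod (2 * 2) → Fin 6 := fun t => Fin.castLE (by omega) (show Fin 4 from t)

def positionsA : ℕ → Fin 2 → SolPos (Fin 6)
  | 0 => ![.node 4, .wait 2]
  | 1 => ![.node 0, .wait 1]
  | 2 => ![.node 3, .node 5]
  | 3 => ![.node 2, .node 2]
  | 4 => ![.node 5, .node 1]
  | 5 => ![.wait 0, .node 0]
  | 6 => ![.wait 0, .node 4]
  | _ => ![.wait 0, .wait 0]

def positionsB : ℕ → Fin 2 → SolPos (Fin 6) :=
  Function.update positionsA 4 ![.node 5, .node 3]

abbrev trailA : Fin 8 → Config (Fin 6) 2 := trailOf exampleWeight positionsA 7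

abbrev trailB : Fin 8 → Config (Fin 6) 2 := trailOf exampleWeight positionsB 7

theorem isBurstFor_exampleBurst : IsBurstFor exampleGraph exampleBurst := by decide

theorem trailA_total : IsTotalLegalTrail exampleGraph exampleWeight exampleBurst 7 trailA :=
  isTotalLegalTrail_trailOf (by decide) (by decide) (by decide) (by decide) (by decide)
    (by decide) (by decide)

theorem trailB_total : IsTotalLegalTrail exampleGraph exampleWeight exampleBurst 7 trailB :=
  isTotalLegalTrail_trailOf (by decide) (by decide) (by decide) (by decide) (by decide)
    (by decide) (by decide)

theorem trailA_perfect : IsPerfect exampleGraph exampleWeight exampleBurst 7 trailA :=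
  isPerfect_of_injective (trailOf_injective (by decide))

theorem trailB_perfect : IsPerfect exampleGraph exampleWeight exampleBurst 7 trailB :=
  isPerfect_of_injective (trailOf_injective (by decide))

theorem trailA_ne_trailB :
    (⟨7, trailA⟩ : TrailData (Fin 6) exampleBurst.m) ≠ ⟨7, trailB⟩ := by
  intro h
  have h4 : positionsA 4 = positionsB 4 :=
    congrArg Prod.snd (congrFun (eq_of_heq (Sigma.mk.inj h).2) 4)
  exact absurd h4 (by decide)

theorem connectedG_exampleGraph : ConnectedG exampleGraph :=
  connectedG_of_reflTransGen (reflTransGen_of_forall_exists_lt (a := 0) (by decide))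

theorem isSolitonGraph_exampleGraph : IsSolitonGraph exampleGraph exampleWeight := by
  simp only [IsSolitonGraph, IsWeighting, nodeWeight, finsum_eq_sum_of_fintype, degree_eq_card]
  exact ⟨by decide, by decide, by decide, by decide,
    fun n => ⟨4, by decide, connectedG_exampleGraph n 4⟩⟩

theorem indecomposable_exampleGraph : Indecomposable exampleGraph exampleWeight :=
  fun u v huv => ⟨{exampleBurst}, by rintro b rfl; exact isBurstFor_exampleBurst, exampleWeight,
    .refl, exampleBurst, rfl, 7, trailA, trailA_total.1.1,
    Or.imp usedInTrail_trailOf usedInTrail_trailOf (by revert u v; decide)⟩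

theorem isChestnut_exampleGraph : IsChestnut exampleGraph exampleWeight := by
  refine ⟨2, exampleCycle, isSolitonGraph_exampleGraph, indecomposable_exampleGraph, le_rfl,
    by decide, by decide, connectedG_exampleGraph, ?bridges, ?entries, ?branches⟩
  case bridges =>
    intro u v huv hcyc
    have : Exterior exampleGraph v ∨ Exterior exampleGraph u := by revert u v; decide
    exact this.elim (fun hv => (isBridge_of_exterior huv hv).1)
      (fun hu => (isBridge_of_exterior (exampleGraph.symm _ _ huv) hu).2)
  case entries => simp only [degree_eq_card]; decide
  case branches =>
    intro n hn hdeg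
    have : ∃ t, n = exampleCycle t := by revert n; simp only [degree_eq_card]; decide
    obtain ⟨t, rfl⟩ := this
    exact absurd rfl (hn t)

end Example

/-- There is a chestnut which is not perfectly deterministic: for
some set `B` of bursts, some state `G' ∈ States(G,B)` and some burst `b ∈ B`
there are at least two distinct perfect total legal configuration trails. -/
theorem exists_chestnut_not_perfectly_deterministic :
    ∃ (V : Type), Finite V ∧
      ∃ (G : SGraph V) (w : V → V → ℕ),
        IsChestnut G w ∧
        ∃ B : Set (Burst V), (∀ b ∈ B, IsBurstFor G b) ∧
          ∃ w', InStates G w B w' ∧ ∃ b ∈ B, ∃ t t' : TrailData V b.m,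
            IsTotalLegalTrailD G w' b t ∧ IsPerfectD G w' b t ∧
            IsTotalLegalTrailD G w' b t' ∧ IsPerfectD G w' b t' ∧ t ≠ t' :=
  ⟨Fin 6, inferInstance, exampleGraph, exampleWeight, isChestnut_exampleGraph, {exampleBurst},
    by rintro b rfl; exact isBurstFor_exampleBurst, exampleWeight, .refl, exampleBurst, rfl,
    ⟨7, trailA⟩, ⟨7, trailB⟩, trailA_total, trailA_perfect, trailB_total, trailB_perfect,
    trailA_ne_trailB⟩

end Soliton
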